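/- arXiv:2307.11229 — 3 statements merged into one kernel-verified Lean document; each statement's English description precedes it below -/
import Mathlib

section
/- Let d ≥ 1 be an integer and let a, b, c, A₀, β₁, β₂ be real numbers with β₁ ≥ max{|b|, a} and β₂ ≥ max{|b|, c}. Define on real d×d matrices the functions F_B(Q) = (a/2)⟨Q,Q⟩_F − (b/3)⟨Q², Q⟩_F + (c/4)(⟨Q,Q⟩_F)² + A₀, F₁(Q) = (β₁/2)⟨Q,Q⟩_F − (b/3)⟨Q², Q⟩_F + (β₂/4)(⟨Q,Q⟩_F)² + A₀, and F₂(Q) = ((β₁−a)/2)⟨Q,Q⟩_F + ((β₂−c)/4)(⟨Q,Q⟩_F)². Then F_B(Q) = F₁(Q) − F₂(Q) for all Q, and both F₁ and F₂ are convex functions on the space of real d×d matrices. -/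
/-!
Along a line `Q + t • H` each potential is a quartic polynomial in `t`, whose second derivative
is the Hessian `β₁‖H‖² - (2b/3)(⟨QH,H⟩ + ⟨HQ,H⟩ + ⟨H²,Q⟩) + β₂(‖Q‖²‖H‖² + 2⟨Q,H⟩²)` at the point
`Q + t • H`. Cauchy–Schwarz and submultiplicativity of the Frobenius norm bound the cubic term by
`2|b|‖Q‖‖H‖²`, so `β₁, β₂ ≥ |b|` make the Hessian at least `|b|‖H‖²(1 - ‖Q‖)² ≥ 0`.
The function `F₂` is the case `b = 0`.
-/

open Matrix

/-- Frobenius inner product of two real `d × d` matrices: `⟨A, B⟩_F = tr(Aᵀ B)`. -/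
noncomputable def frobInner {d : ℕ} (A B : Matrix (Fin d) (Fin d) ℝ) : ℝ :=
  (Aᵀ * B).trace

open Polynomial Set

theorem Polynomial.convexOn_univ_eval {p : ℝ[X]}
    (hp : ∀ t, 0 ≤ (derivative (derivative p)).eval t) :
    ConvexOn ℝ univ fun t => p.eval t := by
  have hderiv (q : ℝ[X]) : deriv (fun t => q.eval t) = fun t => q.derivative.eval t := by
    ext; exact q.deriv
  refine convexOn_univ_of_deriv2_nonneg p.differentiable ?_ fun t => ?_
  · rw [hderiv]; exact p.derivative.differentiable
  · simpa only [Function.iterate_succ, Function.iterate_zero, Function.comp_id,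
      Function.comp_apply, id, hderiv] using hp t

theorem convexOn_univ_of_forall_convexOn_line {E : Type*} [AddCommGroup E] [Module ℝ E]
    {f : E → ℝ} (hf : ∀ x v : E, ConvexOn ℝ univ fun t : ℝ => f (x + t • v)) :
    ConvexOn ℝ univ f := by
  refine ⟨convex_univ, fun x _ y _ a b ha hb hab => ?_⟩
  obtain rfl : b = 1 - a := by linarith
  have h := (hf y (x - y)).2 (mem_univ 1) (mem_univ 0) ha hb hab
  have hy : y + a • (x - y) = a • x + (1 - a) • y := by module
  simpa [hy] using h

attribute [local instance] Matrix.frobeniusNormedAddCommGroup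

section FrobInner

variable {d : ℕ}

/-- The Frobenius norm of `A` is by definition the norm of this vector of rows. -/
theorem frobInner_eq_inner (A B : Matrix (Fin d) (Fin d) ℝ) :
    frobInner A B = inner ℝ
      (WithLp.toLp 2 fun i => WithLp.toLp 2 (A i) : PiLp 2 fun _ : Fin d => EuclideanSpace ℝ (Fin d))
      (WithLp.toLp 2 fun i => WithLp.toLp 2 (B i)) := by
  simp only [frobInner, PiLp.inner_apply, trace, diag, mul_apply, transpose_apply]
  rw [Finset.sum_comm]
  simp [mul_comm]

theorem frobInner_self (A : Matrix (Fin d) (Fin d) ℝ) : frobInner A A = ‖A‖ ^ 2 := by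
  rw [frobInner_eq_inner]; exact real_inner_self_eq_norm_sq _

theorem abs_frobInner_le (A B : Matrix (Fin d) (Fin d) ℝ) : |frobInner A B| ≤ ‖A‖ * ‖B‖ := by
  rw [frobInner_eq_inner]; exact abs_real_inner_le_norm _ _

theorem abs_frobInner_mul_le (A B C : Matrix (Fin d) (Fin d) ℝ) :
    |frobInner (A * B) C| ≤ ‖A‖ * ‖B‖ * ‖C‖ :=
  (abs_frobInner_le _ _).trans <| by gcongr; exact frobenius_norm_mul A B

theorem frobInner_comm (A B : Matrix (Fin d) (Fin d) ℝ) : frobInner A B = frobInner B A := by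
  rw [frobInner, ← trace_transpose, transpose_mul, transpose_transpose, frobInner]

@[simp]
theorem frobInner_add_left (A B C : Matrix (Fin d) (Fin d) ℝ) :
    frobInner (A + B) C = frobInner A C + frobInner B C := by
  simp [frobInner, Matrix.add_mul]

@[simp]
theorem frobInner_add_right (A B C : Matrix (Fin d) (Fin d) ℝ) :
    frobInner A (B + C) = frobInner A B + frobInner A C := by
  simp [frobInner, Matrix.mul_add]

@[simp]
theorem frobInner_smul_left (t : ℝ) (A B : Matrix (Fin d) (Fin d) ℝ) :
    frobInner (t • A) B = t * frobInner A B := by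
  simp [frobInner]

@[simp]
theorem frobInner_smul_right (t : ℝ) (A B : Matrix (Fin d) (Fin d) ℝ) :
    frobInner A (t • B) = t * frobInner A B := by
  simp [frobInner]

end FrobInner

section BulkPotential

variable {d : ℕ}

noncomputable def bulkPotential (α b γ A₀ : ℝ) (Q : Matrix (Fin d) (Fin d) ℝ) : ℝ :=
  α / 2 * frobInner Q Q - b / 3 * frobInner (Q * Q) Q + γ / 4 * frobInner Q Q ^ 2 + A₀

noncomputable def bulkHessian (α b γ : ℝ) (Q H : Matrix (Fin d) (Fin d) ℝ) : ℝ :=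
  α * frobInner H H
    - 2 * b / 3 * (frobInner (Q * H) H + frobInner (H * Q) H + frobInner (H * H) Q)
    + γ * (frobInner Q Q * frobInner H H + 2 * frobInner Q H ^ 2)

theorem exists_eval_eq_bulkPotential_add_smul (α b γ A₀ : ℝ) (x v : Matrix (Fin d) (Fin d) ℝ) :
    ∃ p : ℝ[X], (∀ t, p.eval t = bulkPotential α b γ A₀ (x + t • v)) ∧
      ∀ t, (derivative (derivative p)).eval t = bulkHessian α b γ (x + t • v) v := by
  refine ⟨C (bulkPotential α b γ A₀ x)
    + C (α * frobInner x v
        - b / 3 * (frobInner (x * x) v + frobInner (x * v) x + frobInner (v * x) x)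
        + γ * frobInner x x * frobInner x v) * X
    + C (bulkHessian α b γ x v / 2) * X ^ 2
    + C (-(b / 3) * frobInner (v * v) v + γ * frobInner x v * frobInner v v) * X ^ 3
    + C (γ / 4 * frobInner v v ^ 2) * X ^ 4, fun t => ?_, fun t => ?_⟩
  · simp only [eval_add, eval_mul, eval_C, eval_pow, eval_X, bulkPotential, bulkHessian,
      Matrix.add_mul, Matrix.mul_add, smul_mul_assoc, mul_smul_comm, frobInner_add_left,
      frobInner_add_right, frobInner_smul_left, frobInner_smul_right, frobInner_comm v x]
    ring
  · simp only [derivative_add, derivative_C_mul_X_pow, derivative_C_mul_X, derivative_C,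
      derivative_zero, eval_add, eval_zero, eval_mul, eval_C, eval_pow, eval_X, bulkHessian,
      Matrix.add_mul, Matrix.mul_add, smul_mul_assoc, mul_smul_comm, frobInner_add_left,
      frobInner_add_right, frobInner_smul_left, frobInner_smul_right, frobInner_comm v x]
    ring

theorem bulkHessian_nonneg {α b γ : ℝ} (hα : |b| ≤ α) (hγ : |b| ≤ γ)
    (Q H : Matrix (Fin d) (Fin d) ℝ) : 0 ≤ bulkHessian α b γ Q H := by
  have hcubic : b * (frobInner (Q * H) H + frobInner (H * Q) H + frobInner (H * H) Q)
      ≤ |b| * (3 * ‖Q‖ * ‖H‖ ^ 2) := by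
    refine (le_abs_self _).trans ?_
    rw [abs_mul]
    gcongr
    refine (abs_add_three _ _ _).trans ?_
    linarith [abs_frobInner_mul_le Q H H, abs_frobInner_mul_le H Q H, abs_frobInner_mul_le H H Q]
  have hb := abs_nonneg b
  rw [bulkHessian, frobInner_self, frobInner_self]
  nlinarith [mul_nonneg (sub_nonneg.2 hα) (sq_nonneg ‖H‖),
    mul_nonneg (sub_nonneg.2 hγ) (sq_nonneg (‖Q‖ * ‖H‖)),
    mul_nonneg (hb.trans hγ) (sq_nonneg (frobInner Q H)),
    mul_nonneg hb (sq_nonneg (‖H‖ * (1 - ‖Q‖)))]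

theorem convexOn_bulkPotential {α b γ : ℝ} (hα : |b| ≤ α) (hγ : |b| ≤ γ) (A₀ : ℝ) :
    ConvexOn ℝ univ (bulkPotential (d := d) α b γ A₀) := by
  refine convexOn_univ_of_forall_convexOn_line fun x v => ?_
  obtain ⟨p, hp, hp''⟩ := exists_eval_eq_bulkPotential_add_smul α b γ A₀ x v
  simp_rw [← hp]
  exact Polynomial.convexOn_univ_eval fun t => hp'' t ▸ bulkHessian_nonneg hα hγ _ _

end BulkPotential

theorem convex_splitting_of_bulk_potential_general (d : ℕ)
    (a b c A₀ β₁ β₂ : ℝ) (hβ₁ : max |b| a ≤ β₁) (hβ₂ : max |b| c ≤ β₂) :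
    (∀ Q : Matrix (Fin d) (Fin d) ℝ,
      a / 2 * frobInner Q Q - b / 3 * frobInner (Q * Q) Q
          + c / 4 * (frobInner Q Q) ^ 2 + A₀
        = (β₁ / 2 * frobInner Q Q - b / 3 * frobInner (Q * Q) Q
            + β₂ / 4 * (frobInner Q Q) ^ 2 + A₀)
          - ((β₁ - a) / 2 * frobInner Q Q + (β₂ - c) / 4 * (frobInner Q Q) ^ 2)) ∧
    ConvexOn ℝ Set.univ (fun Q : Matrix (Fin d) (Fin d) ℝ =>
      β₁ / 2 * frobInner Q Q - b / 3 * frobInner (Q * Q) Q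
        + β₂ / 4 * (frobInner Q Q) ^ 2 + A₀) ∧
    ConvexOn ℝ Set.univ (fun Q : Matrix (Fin d) (Fin d) ℝ =>
      (β₁ - a) / 2 * frobInner Q Q + (β₂ - c) / 4 * (frobInner Q Q) ^ 2) := by
  obtain ⟨hb₁, ha⟩ := max_le_iff.1 hβ₁
  obtain ⟨hb₂, hc⟩ := max_le_iff.1 hβ₂
  refine ⟨fun Q => by ring, convexOn_bulkPotential hb₁ hb₂ A₀, ?_⟩
  convert convexOn_bulkPotential (α := β₁ - a) (b := 0) (γ := β₂ - c)
    (by simpa using ha) (by simpa using hc) 0 using 1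
  ext Q
  simp [bulkPotential]

/-- Convex splitting of the Landau–de Gennes bulk potential: with
`β₁ ≥ max {|b|, a}` and `β₂ ≥ max {|b|, c}`, we have `F_B = F₁ - F₂` with `F₁, F₂` convex. -/
theorem convex_splitting_of_bulk_potential (d : ℕ) (hd : 1 ≤ d)
    (a b c A₀ β₁ β₂ : ℝ) (hβ₁ : max |b| a ≤ β₁) (hβ₂ : max |b| c ≤ β₂) :
    (∀ Q : Matrix (Fin d) (Fin d) ℝ,
      a / 2 * frobInner Q Q - b / 3 * frobInner (Q * Q) Q
          + c / 4 * (frobInner Q Q) ^ 2 + A₀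
        = (β₁ / 2 * frobInner Q Q - b / 3 * frobInner (Q * Q) Q
            + β₂ / 4 * (frobInner Q Q) ^ 2 + A₀)
          - ((β₁ - a) / 2 * frobInner Q Q + (β₂ - c) / 4 * (frobInner Q Q) ^ 2)) ∧
    ConvexOn ℝ Set.univ (fun Q : Matrix (Fin d) (Fin d) ℝ =>
      β₁ / 2 * frobInner Q Q - b / 3 * frobInner (Q * Q) Q
        + β₂ / 4 * (frobInner Q Q) ^ 2 + A₀) ∧
    ConvexOn ℝ Set.univ (fun Q : Matrix (Fin d) (Fin d) ℝ =>
      (β₁ - a) / 2 * frobInner Q Q + (β₂ - c) / 4 * (frobInner Q Q) ^ 2) :=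
  convex_splitting_of_bulk_potential_general d a b c A₀ β₁ β₂ hβ₁ hβ₂
end

section
/- Let d ≥ 1 be an integer and let b, β₁, β₂, A₀ be real numbers with β₁ ≥ |b| and β₂ ≥ |b|. Then the function F₁(Q) = (β₁/2)⟨Q,Q⟩_F − (b/3)⟨Q², Q⟩_F + (β₂/4)(⟨Q,Q⟩_F)² + A₀ is convex on the space of real d×d matrices. -/
open Matrix

section aux

variable {d : ℕ}

lemma frobInner_eq (A B : Matrix (Fin d) (Fin d) ℝ) :
    frobInner A B = ∑ p : Fin d × Fin d, A p.1 p.2 * B p.1 p.2 := by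
  simp [frobInner, Matrix.trace, Matrix.mul_apply, Matrix.diag, Fintype.sum_prod_type]
  rw [Finset.sum_comm]

lemma frobInner_self_nonneg (A : Matrix (Fin d) (Fin d) ℝ) : 0 ≤ frobInner A A := by
  rw [frobInner_eq]
  exact Finset.sum_nonneg fun p _ => mul_self_nonneg _

lemma frobInner_cs (A B : Matrix (Fin d) (Fin d) ℝ) :
    (frobInner A B) ^ 2 ≤ frobInner A A * frobInner B B := by
  simp only [frobInner_eq]
  simpa [sq] using Finset.sum_mul_sq_le_sq_mul_sq Finset.univ
    (fun p : Fin d × Fin d => A p.1 p.2) (fun p => B p.1 p.2)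

lemma frobInner_mul_self_le (A B : Matrix (Fin d) (Fin d) ℝ) :
    frobInner (A * B) (A * B) ≤ frobInner A A * frobInner B B := by
  simp only [frobInner_eq, Matrix.mul_apply]
  calc ∑ p : Fin d × Fin d, (∑ j, A p.1 j * B j p.2) * (∑ j, A p.1 j * B j p.2)
      ≤ ∑ p : Fin d × Fin d, (∑ j, A p.1 j ^ 2) * (∑ j, B j p.2 ^ 2) := by
        refine Finset.sum_le_sum fun p _ => ?_
        simpa [sq] using Finset.sum_mul_sq_le_sq_mul_sq Finset.univ
          (fun j => A p.1 j) (fun j => B j p.2)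
    _ = (∑ x, ∑ j, A x j ^ 2) * (∑ y, ∑ j, B j y ^ 2) := by
        rw [Fintype.sum_prod_type]
        dsimp only
        rw [← Finset.sum_mul_sum]
    _ = (∑ p : Fin d × Fin d, A p.1 p.2 * A p.1 p.2) * ∑ p : Fin d × Fin d, B p.1 p.2 * B p.1 p.2 := by
        have hA : (∑ x, ∑ j, A x j ^ 2) = ∑ p : Fin d × Fin d, A p.1 p.2 * A p.1 p.2 := by
          simp [Fintype.sum_prod_type, sq]
        have hB : (∑ y, ∑ j, B j y ^ 2) = ∑ p : Fin d × Fin d, B p.1 p.2 * B p.1 p.2 := by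
          rw [Fintype.sum_prod_type, Finset.sum_comm]
          simp [sq]
        rw [hA, hB]

lemma tri_bound (A B C : Matrix (Fin d) (Fin d) ℝ) :
    (frobInner (A * B) C) ^ 2 ≤ frobInner A A * frobInner B B * frobInner C C :=
  (frobInner_cs (A * B) C).trans
    (mul_le_mul_of_nonneg_right (frobInner_mul_self_le A B) (frobInner_self_nonneg C))

lemma hess_nonneg {b β₁ β₂ : ℝ} (hβ₁ : |b| ≤ β₁) (hβ₂ : |b| ≤ β₂)
    (Q v : Matrix (Fin d) (Fin d) ℝ) :
    0 ≤ β₁ * frobInner v v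
      - 2 * b / 3 * (frobInner (v * v) Q + frobInner (v * Q) v + frobInner (Q * v) v)
      + β₂ * ((frobInner Q v + frobInner v Q) ^ 2 / 2 + frobInner Q Q * frobInner v v) := by
  have hq : 0 ≤ frobInner v v := frobInner_self_nonneg v
  have hS : 0 ≤ frobInner Q Q := frobInner_self_nonneg Q
  set r := Real.sqrt (frobInner Q Q) with hrdef
  have hr0 : 0 ≤ r := Real.sqrt_nonneg _
  have hr2 : r ^ 2 = frobInner Q Q := Real.sq_sqrt hS
  have hqr : 0 ≤ frobInner v v * r := mul_nonneg hq hr0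
  have hb0 : 0 ≤ |b| := abs_nonneg b
  have hT1 : |frobInner (v * v) Q| ≤ frobInner v v * r := by
    apply abs_le_of_sq_le_sq _ hqr
    calc (frobInner (v * v) Q) ^ 2 ≤ frobInner v v * frobInner v v * frobInner Q Q :=
          tri_bound v v Q
      _ = (frobInner v v * r) ^ 2 := by rw [← hr2]; ring
  have hT2 : |frobInner (v * Q) v| ≤ frobInner v v * r := by
    apply abs_le_of_sq_le_sq _ hqr
    calc (frobInner (v * Q) v) ^ 2 ≤ frobInner v v * frobInner Q Q * frobInner v v :=
          tri_bound v Q v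
      _ = (frobInner v v * r) ^ 2 := by rw [← hr2]; ring
  have hT3 : |frobInner (Q * v) v| ≤ frobInner v v * r := by
    apply abs_le_of_sq_le_sq _ hqr
    calc (frobInner (Q * v) v) ^ 2 ≤ frobInner Q Q * frobInner v v * frobInner v v :=
          tri_bound Q v v
      _ = (frobInner v v * r) ^ 2 := by rw [← hr2]; ring
  have hb1 : b * frobInner (v * v) Q ≤ |b| * (frobInner v v * r) :=
    (le_abs_self _).trans (by rw [abs_mul]; exact mul_le_mul_of_nonneg_left hT1 hb0)
  have hb2 : b * frobInner (v * Q) v ≤ |b| * (frobInner v v * r) :=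
    (le_abs_self _).trans (by rw [abs_mul]; exact mul_le_mul_of_nonneg_left hT2 hb0)
  have hb3 : b * frobInner (Q * v) v ≤ |b| * (frobInner v v * r) :=
    (le_abs_self _).trans (by rw [abs_mul]; exact mul_le_mul_of_nonneg_left hT3 hb0)
  rw [← hr2]
  nlinarith [mul_nonneg (sub_nonneg.mpr hβ₁) hq,
    mul_nonneg (sub_nonneg.mpr hβ₂) (mul_nonneg (sq_nonneg r) hq),
    mul_nonneg hb0 (mul_nonneg hq (sq_nonneg (1 - r))),
    mul_nonneg (hb0.trans hβ₂) (sq_nonneg (frobInner Q v + frobInner v Q)),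
    hb1, hb2, hb3]

lemma quartic_convex (a0 a1 a2 a3 a4 : ℝ)
    (h : ∀ t : ℝ, 0 ≤ 2*a2 + 6*a3*t + 12*a4*t^2) :
    ConvexOn ℝ Set.univ (fun t : ℝ => a0 + a1*t + a2*t^2 + a3*t^3 + a4*t^4) := by
  set f : ℝ → ℝ := fun t => a0 + a1*t + a2*t^2 + a3*t^3 + a4*t^4 with hf
  have hd1 : ∀ t : ℝ, HasDerivAt f (a1 + 2*a2*t + 3*a3*t^2 + 4*a4*t^3) t := by
    intro t
    have h0 := hasDerivAt_const t a0
    have h1 := (hasDerivAt_id t).const_mul a1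
    have h2 := (hasDerivAt_pow 2 t).const_mul a2
    have h3 := (hasDerivAt_pow 3 t).const_mul a3
    have h4 := (hasDerivAt_pow 4 t).const_mul a4
    convert (((h0.add h1).add h2).add h3).add h4 using 1
    · rfl
    · rfl
    · funext y; simp only [hf, Pi.add_apply, id]
    push_cast; ring
  have hderiv : deriv f = fun t => a1 + 2*a2*t + 3*a3*t^2 + 4*a4*t^3 :=
    funext fun t => (hd1 t).deriv
  have hd2 : ∀ t : ℝ, HasDerivAt (fun t : ℝ => a1 + 2*a2*t + 3*a3*t^2 + 4*a4*t^3)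
      (2*a2 + 6*a3*t + 12*a4*t^2) t := by
    intro t
    have h0 := hasDerivAt_const t a1
    have h1 := (hasDerivAt_id t).const_mul (2*a2)
    have h2 := (hasDerivAt_pow 2 t).const_mul (3*a3)
    have h3 := (hasDerivAt_pow 3 t).const_mul (4*a4)
    convert ((h0.add h1).add h2).add h3 using 1
    · rfl
    · rfl
    · funext y; simp only [Pi.add_apply, id]
    push_cast; ring
  apply convexOn_of_deriv2_nonneg convex_univ
  · exact Continuous.continuousOn (by continuity)
  · intro t _
    exact (hd1 t).differentiableAt.differentiableWithinAt
  · intro t _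
    rw [hderiv]
    exact (hd2 t).differentiableAt.differentiableWithinAt
  · intro t _
    have : deriv^[2] f t = deriv (deriv f) t := by
      simp [Function.iterate_succ]
    rw [this, hderiv, (hd2 t).deriv]
    exact h t

end aux

/-- With `β₁ ≥ |b|` and `β₂ ≥ |b|`, the function
`F₁(Q) = (β₁/2)⟨Q,Q⟩_F − (b/3)⟨Q², Q⟩_F + (β₂/4)(⟨Q,Q⟩_F)² + A₀`
is convex on the space of real `d × d` matrices. -/
theorem F1_convex (d : ℕ) (hd : 1 ≤ d) (b β₁ β₂ A₀ : ℝ)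
    (hβ₁ : |b| ≤ β₁) (hβ₂ : |b| ≤ β₂) :
    ConvexOn ℝ Set.univ (fun Q : Matrix (Fin d) (Fin d) ℝ =>
      β₁ / 2 * frobInner Q Q - b / 3 * frobInner (Q * Q) Q
        + β₂ / 4 * (frobInner Q Q) ^ 2 + A₀) := by
  refine ⟨convex_univ, ?_⟩
  intro x _ y _ a c ha hc hac
  set v : Matrix (Fin d) (Fin d) ℝ := y - x with hv
  set s0 := frobInner x x with hs0
  set p1 := frobInner x v with hp1
  set p2 := frobInner v x with hp2
  set q := frobInner v v with hq
  set c0 := frobInner (x*x) x with hc0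
  set c1 := frobInner (v*x) x + frobInner (x*v) x + frobInner (x*x) v with hc1
  set c2 := frobInner (v*v) x + frobInner (v*x) v + frobInner (x*v) v with hc2
  set c3 := frobInner (v*v) v with hc3
  set a0 := β₁/2*s0 - b/3*c0 + β₂/4*s0^2 + A₀ with ha0
  set a1 := β₁/2*(p1+p2) - b/3*c1 + β₂/4*(2*s0*(p1+p2)) with ha1
  set a2 := β₁/2*q - b/3*c2 + β₂/4*((p1+p2)^2 + 2*s0*q) with ha2
  set a3 := -(b/3)*c3 + β₂/4*(2*(p1+p2)*q) with ha3
  set a4 := β₂/4*q^2 with ha4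
  have key : ∀ t : ℝ,
      β₁ / 2 * frobInner (x + t • v) (x + t • v)
        - b / 3 * frobInner ((x + t • v) * (x + t • v)) (x + t • v)
        + β₂ / 4 * (frobInner (x + t • v) (x + t • v)) ^ 2 + A₀
      = a0 + a1*t + a2*t^2 + a3*t^3 + a4*t^4 := by
    intro t
    simp only [ha0, ha1, ha2, ha3, ha4, hs0, hp1, hp2, hq, hc0, hc1, hc2, hc3, frobInner,
      Matrix.transpose_add, Matrix.transpose_smul, Matrix.transpose_mul,
      Matrix.add_mul, Matrix.mul_add, Matrix.smul_mul, Matrix.mul_smul,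
      Matrix.trace_add, Matrix.trace_smul, smul_eq_mul]
    ring
  have hhess : ∀ t : ℝ, 0 ≤ 2*a2 + 6*a3*t + 12*a4*t^2 := by
    intro t
    have hid : 2*a2 + 6*a3*t + 12*a4*t^2
        = β₁ * frobInner v v
          - 2 * b / 3 * (frobInner (v * v) (x + t • v) + frobInner (v * (x + t • v)) v
            + frobInner ((x + t • v) * v) v)
          + β₂ * ((frobInner (x + t • v) v + frobInner v (x + t • v)) ^ 2 / 2
            + frobInner (x + t • v) (x + t • v) * frobInner v v) := by
      simp only [ha2, ha3, ha4, hs0, hp1, hp2, hq, hc2, hc3, frobInner,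
        Matrix.transpose_add, Matrix.transpose_smul, Matrix.transpose_mul,
        Matrix.add_mul, Matrix.mul_add, Matrix.smul_mul, Matrix.mul_smul,
        Matrix.trace_add, Matrix.trace_smul, smul_eq_mul]
      ring
    rw [hid]
    exact hess_nonneg hβ₁ hβ₂ (x + t • v) v
  have hP := (quartic_convex a0 a1 a2 a3 a4 hhess).2
    (Set.mem_univ (0:ℝ)) (Set.mem_univ (1:ℝ)) ha hc hac
  simp only [smul_eq_mul, mul_zero, mul_one, zero_add] at hP
  have hxy : a • x + c • y = x + c • v := by
    have hA : a = 1 - c := by linarith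
    rw [hA, hv, smul_sub, sub_smul, one_smul]
    abel
  have h0 : x + (0:ℝ) • v = x := by simp
  have h1 : x + (1:ℝ) • v = y := by simp [hv]
  simp only [smul_eq_mul]
  calc β₁ / 2 * frobInner (a • x + c • y) (a • x + c • y)
        - b / 3 * frobInner ((a • x + c • y) * (a • x + c • y)) (a • x + c • y)
        + β₂ / 4 * (frobInner (a • x + c • y) (a • x + c • y)) ^ 2 + A₀
      = a0 + a1*c + a2*c^2 + a3*c^3 + a4*c^4 := by rw [hxy]; exact key c
    _ ≤ a * (a0 + a1*0 + a2*0^2 + a3*0^3 + a4*0^4)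
        + c * (a0 + a1*1 + a2*1^2 + a3*1^3 + a4*1^4) := by
        ring_nf at hP ⊢
        linarith [hP]
    _ = a * (β₁ / 2 * frobInner x x - b / 3 * frobInner (x * x) x
          + β₂ / 4 * (frobInner x x) ^ 2 + A₀)
        + c * (β₁ / 2 * frobInner y y - b / 3 * frobInner (y * y) y
          + β₂ / 4 * (frobInner y y) ^ 2 + A₀) := by
        have k0 := key 0
        have k1 := key 1
        rw [h0] at k0
        rw [h1] at k1
        rw [← k0, ← k1]
end

section
/- Let f : ℝ → ℝ be twice continuously differentiable such that the derivative f′ has compact support. Fix b ∈ ℝ and define g : ℝ → ℝ by g(a) = (f(a) − f(b))/(a − b) for a ≠ b and g(b) = f′(b). Then g is Lipschitz continuous on ℝ, i.e., there exists K ≥ 0 such that |g(a₁) − g(a₂)| ≤ K|a₁ − a₂| for all a₁, a₂ ∈ ℝ. -/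
/-- If `f : ℝ → ℝ` is twice continuously differentiable and `f′` has compact support, then
for fixed `b` the divided-difference function `g(a) = (f(a) − f(b))/(a − b)` for `a ≠ b`,
`g(b) = f′(b)`, is Lipschitz continuous on `ℝ`. -/
theorem divided_difference_lipschitz (f : ℝ → ℝ) (hf : ContDiff ℝ 2 f)
    (hsupp : HasCompactSupport (deriv f)) (b : ℝ) (g : ℝ → ℝ)
    (hg : ∀ a : ℝ, g a = if a = b then deriv f b else (f a - f b) / (a - b)) :
    ∃ K : ℝ, 0 ≤ K ∧ ∀ a₁ a₂ : ℝ, |g a₁ - g a₂| ≤ K * |a₁ - a₂| := by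
  have h2 : (2 : WithTop ℕ∞) = 1 + 1 := by norm_num
  have hf' : ContDiff ℝ 1 (deriv f) := by
    have := (contDiff_succ_iff_deriv.mp (h2 ▸ hf)).2.2
    exact this
  have hderiv_cont : Continuous (deriv f) := hf.continuous_deriv one_le_two
  have hderiv2_cont : Continuous (deriv (deriv f)) := hf'.continuous_deriv le_rfl
  have hdiff : Differentiable ℝ f := hf.differentiable two_ne_zero
  have hdiff' : Differentiable ℝ (deriv f) := hf'.differentiable one_ne_zero
  obtain ⟨M, hM⟩ := hsupp.deriv.exists_bound_of_continuous hderiv2_cont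
  have hM0 : 0 ≤ M := le_trans (norm_nonneg _) (hM 0)
  -- f' is Lipschitz with constant M
  have hlip : LipschitzWith M.toNNReal (deriv f) := by
    apply lipschitzWith_of_nnnorm_deriv_le hdiff'
    intro x
    rw [← NNReal.coe_le_coe, coe_nnnorm, Real.coe_toNNReal _ hM0]
    exact hM x
  have hlipR : ∀ x y : ℝ, |deriv f x - deriv f y| ≤ M * |x - y| := by
    intro x y
    have := hlip.dist_le_mul x y
    rwa [Real.dist_eq, Real.dist_eq, Real.coe_toNNReal _ hM0] at this
  -- integral representation
  set φ : ℝ → ℝ := fun a => ∫ t in (0:ℝ)..1, deriv f (b + t * (a - b)) with hφ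
  have hrep : ∀ a : ℝ, g a = φ a := by
    intro a
    rcases eq_or_ne a b with rfl | hab
    · simp [hg, hφ]
    · rw [hg, if_neg hab]
      have hcv : ∫ t in (0:ℝ)..1, (a - b) • (deriv f ∘ (fun t => b + t * (a - b))) t
          = ∫ u in (b + 0 * (a-b))..(b + 1 * (a-b)), deriv f u := by
        apply intervalIntegral.integral_comp_smul_deriv
        · intro x _
          simpa [mul_comm] using ((hasDerivAt_id x).const_mul (a - b)).const_add b
        · exact continuousOn_const
        · exact hderiv_cont
      have hfund : ∫ u in b..a, deriv f u = f a - f b := by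
        apply intervalIntegral.integral_deriv_eq_sub (fun x _ => hdiff x)
        exact hderiv_cont.intervalIntegrable _ _
      have hconst : ∫ t in (0:ℝ)..1, (a - b) • (deriv f ∘ (fun t => b + t * (a - b))) t
          = (a - b) * φ a := by
        simp only [smul_eq_mul, Function.comp]
        rw [intervalIntegral.integral_const_mul]
      have : (a - b) * φ a = f a - f b := by
        rw [← hconst, hcv]
        simpa using hfund
      field_simp [sub_ne_zero.mpr hab] at this ⊢
      linarith
  refine ⟨M, hM0, fun a₁ a₂ => ?_⟩
  rw [hrep a₁, hrep a₂, hφ]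
  have hint : ∀ a : ℝ, IntervalIntegrable (fun t => deriv f (b + t * (a - b)))
      MeasureTheory.volume 0 1 := by
    intro a
    exact (hderiv_cont.comp (by continuity)).intervalIntegrable _ _
  rw [← intervalIntegral.integral_sub (hint a₁) (hint a₂)]
  have := intervalIntegral.norm_integral_le_of_norm_le_const (a := 0) (b := 1)
    (C := M * |a₁ - a₂|)
    (f := fun t => deriv f (b + t * (a₁ - b)) - deriv f (b + t * (a₂ - b))) ?_
  · simpa using this
  · intro t ht
    rw [Set.uIoc_of_le zero_le_one] at ht
    have ht0 : 0 < t := ht.1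
    have ht1 : t ≤ 1 := ht.2
    have key := hlipR (b + t * (a₁ - b)) (b + t * (a₂ - b))
    have heq : (b + t * (a₁ - b)) - (b + t * (a₂ - b)) = t * (a₁ - a₂) := by ring
    rw [heq, abs_mul, abs_of_pos ht0] at key
    calc ‖deriv f (b + t * (a₁ - b)) - deriv f (b + t * (a₂ - b))‖
        ≤ M * (t * |a₁ - a₂|) := key
      _ ≤ M * (1 * |a₁ - a₂|) := by
          apply mul_le_mul_of_nonneg_left _ hM0
          apply mul_le_mul_of_nonneg_right ht1 (abs_nonneg _)
      _ = M * |a₁ - a₂| := by ring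
end
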